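/- arXiv:1612.06545 — 3 statements merged into one kernel-verified Lean document; each statement's English description precedes it below -/
import Mathlib

section
/- For every natural number k ≥ 1, log(k+1) ≥ log(k+e) · (log 2 / log(1+e)), where e is Euler's number. -/
theorem log_succ_ge (k : ℕ) (hk : 1 ≤ k) :
    Real.log (k + 1) ≥
      Real.log (k + Real.exp 1) * (Real.log 2 / Real.log (1 + Real.exp 1)) := by
  have hk1 : (1 : ℝ) ≤ k := by exact_mod_cast hk
  have he : (2 : ℝ) ≤ Real.exp 1 := by
    have := Real.add_one_le_exp 1; linarith
  have ha : Real.log 2 ≤ Real.log (k + 1) :=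
    Real.log_le_log (by norm_num) (by linarith)
  have hb : Real.log 2 ≤ Real.log (1 + Real.exp 1) :=
    Real.log_le_log (by norm_num) (by linarith)
  have hb0 : 0 < Real.log (1 + Real.exp 1) := Real.log_pos (by linarith)
  have hmul : k + Real.exp 1 ≤ (k + 1) * (1 + Real.exp 1) / 2 := by nlinarith
  have hB : Real.log (k + Real.exp 1) ≤
      Real.log (k + 1) + Real.log (1 + Real.exp 1) - Real.log 2 := by
    have h1 : Real.log (k + Real.exp 1) ≤ Real.log ((k + 1) * (1 + Real.exp 1) / 2) :=
      Real.log_le_log (by positivity) hmul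
    rw [Real.log_div (by positivity) (by norm_num),
        Real.log_mul (by positivity) (by positivity)] at h1
    linarith
  rw [ge_iff_le, mul_div_assoc', div_le_iff₀ hb0]
  have h2 : 0 < Real.log 2 := Real.log_pos (by norm_num)
  nlinarith [mul_nonneg (sub_nonneg.2 ha) (sub_nonneg.2 hb), mul_le_mul_of_nonneg_right hB h2.le]
end

section
/- Let (a_ℓ)_{ℓ≥1} be nonnegative reals with ∑_{ℓ=1}^∞ log(ℓ+e)·a_ℓ ≤ C for a constant C > 0, and let μ > 0. Define y(k) = kμ·log(1 - 1/(k+e)) + ∑_{ℓ=1}^∞ log(1 + ℓ/(k+e))·a_ℓ for k ≥ 1. Then there exist δ > 0 and K ∈ ℕ such that y(k) ≤ -2δ + C for all k ≥ 1 and y(k) ≤ -δ for all k > K. -/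
/-!
Since `log (1 - 1/x) ≤ -1/x`, the service term is at most `-k μ / (k + e) ≤ -μ / (1 + e)`
for `k ≥ 1`. Each batch term `log (1 + ℓ / (k + e)) a_ℓ` lies between `0` and `log (ℓ + e) a_ℓ`,
so the batch sum is at most `C` and, by dominated convergence, tends to `0` as `k → ∞`.
Take `2δ = μ / (1 + e)` and `K` beyond which the batch sum is at most `δ`.
-/

open Filter Topology

theorem mul_log_one_sub_one_div_add_le {t c : ℝ} (ht : 1 ≤ t) (hc : 0 < c) :
    t * Real.log (1 - 1 / (t + c)) ≤ -(1 / (1 + c)) := by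
  have hpos : 0 < t + c := by linarith
  have hlog : Real.log (1 - 1 / (t + c)) ≤ -(1 / (t + c)) := by
    have hlt : 1 / (t + c) < 1 := (div_lt_one hpos).2 (by linarith)
    linarith [Real.log_le_sub_one_of_pos (sub_pos.2 hlt)]
  calc t * Real.log (1 - 1 / (t + c)) ≤ t * -(1 / (t + c)) :=
        mul_le_mul_of_nonneg_left hlog (by linarith)
    _ = -(t / (t + c)) := by ring
    _ ≤ -(1 / (1 + c)) := by
      rw [neg_le_neg_iff, div_le_div_iff₀ (by linarith) hpos]
      nlinarith

section BatchSum

variable {ι : Type*} {n b : ι → ℝ} {c : ℝ}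

theorem log_one_add_div_nonneg {m x : ℝ} (hm : 0 ≤ m) (hx : 0 ≤ x) :
    0 ≤ Real.log (1 + m / x) :=
  Real.log_nonneg (by linarith [div_nonneg hm hx])

theorem log_one_add_div_le_log_add {m x : ℝ} (hm : 0 ≤ m) (hx : 1 ≤ x) (hc : 1 ≤ c) :
    Real.log (1 + m / x) ≤ Real.log (m + c) :=
  Real.log_le_log (by linarith [div_nonneg hm (zero_le_one.trans hx)])
    (by linarith [div_le_self hm hx])

theorem abs_log_one_add_div_mul_le (hn : ∀ i, 0 ≤ n i) (hb : ∀ i, 0 ≤ b i) (hc : 1 ≤ c)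
    {x : ℝ} (hx : 1 ≤ x) (i : ι) :
    |Real.log (1 + n i / x) * b i| ≤ Real.log (n i + c) * b i := by
  rw [abs_of_nonneg (mul_nonneg (log_one_add_div_nonneg (hn i) (by linarith)) (hb i))]
  exact mul_le_mul_of_nonneg_right (log_one_add_div_le_log_add (hn i) hx hc) (hb i)

theorem summable_log_one_add_div_mul (hn : ∀ i, 0 ≤ n i) (hb : ∀ i, 0 ≤ b i) (hc : 1 ≤ c)
    (hsum : Summable fun i => Real.log (n i + c) * b i) {x : ℝ} (hx : 1 ≤ x) :
    Summable fun i => Real.log (1 + n i / x) * b i :=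
  hsum.of_norm_bounded (abs_log_one_add_div_mul_le hn hb hc hx)

theorem tsum_log_one_add_div_mul_le (hn : ∀ i, 0 ≤ n i) (hb : ∀ i, 0 ≤ b i) (hc : 1 ≤ c)
    (hsum : Summable fun i => Real.log (n i + c) * b i) {x : ℝ} (hx : 1 ≤ x) :
    ∑' i, Real.log (1 + n i / x) * b i ≤ ∑' i, Real.log (n i + c) * b i :=
  (summable_log_one_add_div_mul hn hb hc hsum hx).tsum_le_tsum
    (fun i => (le_abs_self _).trans (abs_log_one_add_div_mul_le hn hb hc hx i)) hsum

theorem tendsto_tsum_log_one_add_div_mul (hn : ∀ i, 0 ≤ n i) (hb : ∀ i, 0 ≤ b i)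
    (hc : 1 ≤ c) (hsum : Summable fun i => Real.log (n i + c) * b i) :
    Tendsto (fun x => ∑' i, Real.log (1 + n i / x) * b i) atTop (𝓝 0) := by
  have hterm (i : ι) : Tendsto (fun x => Real.log (1 + n i / x) * b i) atTop (𝓝 0) := by
    have hratio : Tendsto (fun x => 1 + n i / x) atTop (𝓝 1) := by
      simpa using (tendsto_const_nhds.div_atTop (tendsto_id (α := ℝ))).const_add 1
    simpa using ((Real.continuousAt_log one_ne_zero).tendsto.comp hratio).mul_const (b i)
  simpa using tendsto_tsum_of_dominated_convergence hsum hterm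
    (eventually_ge_atTop 1 |>.mono fun x hx => abs_log_one_add_div_mul_le hn hb hc hx)

end BatchSum

theorem drift_bound_general (a : ℕ → ℝ) (C μ : ℝ) (hμ : 0 < μ)
    (ha : ∀ ℓ, 1 ≤ ℓ → 0 ≤ a ℓ)
    (hsum : Summable (fun ℓ : ℕ => Real.log ((ℓ + 1 : ℕ) + Real.exp 1) * a (ℓ + 1)))
    (hC' : ∑' ℓ : ℕ, Real.log ((ℓ + 1 : ℕ) + Real.exp 1) * a (ℓ + 1) ≤ C)
    (y : ℕ → ℝ)
    (hy : ∀ k : ℕ, 1 ≤ k →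
      y k = (k : ℝ) * μ * Real.log (1 - 1 / (k + Real.exp 1)) +
        ∑' ℓ : ℕ, Real.log (1 + ((ℓ + 1 : ℕ) : ℝ) / (k + Real.exp 1)) * a (ℓ + 1)) :
    ∃ δ : ℝ, 0 < δ ∧ ∃ K : ℕ,
      (∀ k : ℕ, 1 ≤ k → y k ≤ -2 * δ + C) ∧
      (∀ k : ℕ, K < k → y k ≤ -δ) := by
  set e := Real.exp 1
  set S : ℕ → ℝ := fun k => ∑' ℓ : ℕ, Real.log (1 + ((ℓ + 1 : ℕ) : ℝ) / (k + e)) * a (ℓ + 1)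
  have he : 1 ≤ e := Real.one_le_exp zero_le_one
  have hn : ∀ ℓ : ℕ, (0 : ℝ) ≤ ((ℓ + 1 : ℕ) : ℝ) := fun ℓ => Nat.cast_nonneg _
  have hb : ∀ ℓ : ℕ, 0 ≤ a (ℓ + 1) := fun ℓ => ha _ (Nat.le_add_left 1 ℓ)
  have hke : ∀ k : ℕ, 1 ≤ (k : ℝ) + e := fun k => by linarith [k.cast_nonneg (α := ℝ)]
  have hy_le : ∀ k : ℕ, 1 ≤ k → y k ≤ -(μ / (1 + e)) + S k := fun k hk =>
    calc y k = μ * ((k : ℝ) * Real.log (1 - 1 / (k + e))) + S k := by rw [hy k hk]; ring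
      _ ≤ μ * -(1 / (1 + e)) + S k := by
        gcongr
        exact mul_log_one_sub_one_div_add_le (Nat.one_le_cast.2 hk) (Real.exp_pos 1)
      _ = -(μ / (1 + e)) + S k := by ring
  have hS_le : ∀ k, S k ≤ C := fun k =>
    (tsum_log_one_add_div_mul_le hn hb he hsum (hke k)).trans hC'
  have hS_lim : Tendsto S atTop (𝓝 0) :=
    (tendsto_tsum_log_one_add_div_mul hn hb he hsum).comp
      (tendsto_atTop_add_const_right _ e tendsto_natCast_atTop_atTop)
  have hδ : 0 < μ / (2 * (1 + e)) := by positivity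
  obtain ⟨K, hK⟩ := eventually_atTop.1 (hS_lim.eventually (ge_mem_nhds hδ))
  refine ⟨μ / (2 * (1 + e)), hδ, K, fun k hk => ?_, fun k hk => ?_⟩
  · calc y k ≤ -(μ / (1 + e)) + S k := hy_le k hk
      _ ≤ -(μ / (1 + e)) + C := by gcongr; exact hS_le k
      _ = -2 * (μ / (2 * (1 + e))) + C := by field_simp
  · calc y k ≤ -(μ / (1 + e)) + S k := hy_le k (by omega)
      _ ≤ -(μ / (1 + e)) + μ / (2 * (1 + e)) := by gcongr; exact hK k hk.le
      _ = -(μ / (2 * (1 + e))) := by field_simp; ring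

theorem drift_bound (a : ℕ → ℝ) (C μ : ℝ) (hC : 0 < C) (hμ : 0 < μ)
    (ha : ∀ ℓ, 1 ≤ ℓ → 0 ≤ a ℓ)
    (hsum : Summable (fun ℓ : ℕ => Real.log ((ℓ + 1 : ℕ) + Real.exp 1) * a (ℓ + 1)))
    (hC' : ∑' ℓ : ℕ, Real.log ((ℓ + 1 : ℕ) + Real.exp 1) * a (ℓ + 1) ≤ C)
    (y : ℕ → ℝ)
    (hy : ∀ k : ℕ, 1 ≤ k →
      y k = (k : ℝ) * μ * Real.log (1 - 1 / (k + Real.exp 1)) +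
        ∑' ℓ : ℕ, Real.log (1 + ((ℓ + 1 : ℕ) : ℝ) / (k + Real.exp 1)) * a (ℓ + 1)) :
    ∃ δ : ℝ, 0 < δ ∧ ∃ K : ℕ,
      (∀ k : ℕ, 1 ≤ k → y k ≤ -2 * δ + C) ∧
      (∀ k : ℕ, K < k → y k ≤ -δ) :=
  drift_bound_general a C μ hμ ha hsum hC' y hy
end

section
/- Let (π(k))_{k≥0} be nonnegative reals summing to 1 and (b(k))_{k≥1} nonnegative reals, and μ > 0, such that the balance relation kμ·π(k) = (k+1)μ·π(k+1) + ∑_{ℓ=0}^{k} π(k-ℓ)·c(ℓ) holds for all k ≥ 0, where c(0) = -∑_{ℓ≥1} b(ℓ) ≤ 0 and c(ℓ) = b(ℓ) for ℓ ≥ 1, with ∑_{ℓ≥1} b(ℓ) < ∞. If π(0) > 0, then ∑_{k=1}^∞ log(k+e)·b(k) ≤ (μ·log(1+e)/log 2)·(1 - π(0))/π(0) < ∞. -/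
lemma aux_harm (ℓ : ℕ) : Real.log (ℓ + 1) ≤ ∑ n ∈ Finset.range ℓ, (1:ℝ)/(n+1) := by
  induction ℓ with
  | zero => simp
  | succ m ih =>
    rw [Finset.sum_range_succ]
    have h1 : Real.log ((m+2:ℝ)/(m+1:ℝ)) ≤ (m+2:ℝ)/(m+1:ℝ) - 1 :=
      Real.log_le_sub_one_of_pos (by positivity)
    have h2 : Real.log ((m+2:ℝ)/(m+1:ℝ)) = Real.log (m+2:ℝ) - Real.log (m+1:ℝ) :=
      Real.log_div (by positivity) (by positivity)
    have h3 : (m+2:ℝ)/(m+1:ℝ) - 1 = 1/(m+1:ℝ) := by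
      field_simp; norm_num
    push_cast
    have h4 : ((m:ℝ) + 1 + 1) = (m:ℝ) + 2 := by ring
    rw [h4]
    linarith [ih]

lemma aux_ratio (x : ℝ) (hx : 1 ≤ x) :
    Real.log (x + Real.exp 1) ≤ Real.log (1 + Real.exp 1) / Real.log 2 * Real.log (x + 1) := by
  have he : (1:ℝ) < Real.exp 1 := by
    have := Real.exp_one_gt_d9; linarith
  have hl2 : (0:ℝ) < Real.log 2 := Real.log_pos (by norm_num)
  have h2x : Real.log 2 ≤ Real.log (x+1) := Real.log_le_log (by norm_num) (by linarith)
  have hD : Real.log 2 < Real.log (1 + Real.exp 1) := Real.log_lt_log (by norm_num) (by linarith)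
  have hstep : x + Real.exp 1 ≤ (x+1) * ((1 + Real.exp 1)/2) := by nlinarith
  have h4 : Real.log (x + Real.exp 1) ≤ Real.log ((x+1) * ((1 + Real.exp 1)/2)) :=
    Real.log_le_log (by positivity) hstep
  have h5 : Real.log ((x+1) * ((1 + Real.exp 1)/2)) =
      Real.log (x+1) + (Real.log (1 + Real.exp 1) - Real.log 2) := by
    rw [Real.log_mul (by positivity) (by positivity), Real.log_div (by positivity) (by norm_num)]
  rw [h5] at h4
  rw [div_mul_eq_mul_div, le_div_iff₀ hl2]
  nlinarith

theorem necessity_scalar (π b : ℕ → ℝ) (μ : ℝ) (hμ : 0 < μ)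
    (hπ : ∀ k, 0 ≤ π k) (hπ1 : HasSum π 1)
    (hb : ∀ ℓ, 1 ≤ ℓ → 0 ≤ b ℓ)
    (hbs : Summable (fun ℓ : ℕ => b (ℓ + 1)))
    (hbal : ∀ k : ℕ,
      (k : ℝ) * μ * π k = ((k : ℝ) + 1) * μ * π (k + 1) +
        ∑ ℓ ∈ Finset.range (k + 1), π (k - ℓ) *
          (if ℓ = 0 then -(∑' j : ℕ, b (j + 1)) else b ℓ))
    (h0 : 0 < π 0) :
    Summable (fun k : ℕ => Real.log ((k + 1 : ℕ) + Real.exp 1) * b (k + 1)) ∧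
    ∑' k : ℕ, Real.log ((k + 1 : ℕ) + Real.exp 1) * b (k + 1) ≤
      (μ * Real.log (1 + Real.exp 1) / Real.log 2) * (1 - π 0) / π 0 := by
  set B : ℝ := ∑' j : ℕ, b (j + 1) with hB
  set c : ℕ → ℝ := fun ℓ => if ℓ = 0 then -B else b ℓ with hc
  set P : ℕ → ℝ := fun m => ∑ j ∈ Finset.range (m+1), π j with hP
  -- Step A : telescoping identity
  have key : ∀ n : ℕ, ∑ ℓ ∈ Finset.range n, c ℓ * P (n - 1 - ℓ) = -((n:ℝ) * μ * π n) := by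
    intro n
    induction n with
    | zero => simp
    | succ m ih =>
      have hsplit : ∑ ℓ ∈ Finset.range (m+1), c ℓ * P (m + 1 - 1 - ℓ) =
          (∑ ℓ ∈ Finset.range m, c ℓ * P (m - 1 - ℓ)) +
          ∑ ℓ ∈ Finset.range (m+1), π (m - ℓ) * c ℓ := by
        rw [Finset.sum_range_succ, Finset.sum_range_succ (f := fun ℓ => π (m - ℓ) * c ℓ)]
        have h1 : ∀ ℓ ∈ Finset.range m, c ℓ * P (m + 1 - 1 - ℓ) =
            c ℓ * P (m - 1 - ℓ) + π (m - ℓ) * c ℓ := by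
          intro ℓ hℓ
          have hℓm : ℓ < m := Finset.mem_range.mp hℓ
          have hme : m - ℓ = (m - 1 - ℓ) + 1 := by omega
          have h2 : m + 1 - 1 - ℓ = m - ℓ := by omega
          rw [h2, hme]
          have h3 : P ((m - 1 - ℓ) + 1) = P (m - 1 - ℓ) + π ((m - 1 - ℓ) + 1) := by
            simp [hP, Finset.sum_range_succ]
          rw [h3]; ring
        rw [Finset.sum_congr rfl h1, Finset.sum_add_distrib]
        have h4 : m + 1 - 1 - m = 0 := by omega
        rw [h4]
        have h5 : P 0 = π 0 := by simp [hP]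
        rw [h5]
        have h6 : m - m = 0 := by omega
        rw [h6]
        ring
      rw [hsplit, ih]
      have hb' := hbal m
      have h7 : ∑ ℓ ∈ Finset.range (m+1), π (m - ℓ) * c ℓ =
          (m:ℝ) * μ * π m - ((m:ℝ)+1) * μ * π (m+1) := by
        rw [hc]; linarith [hb']
      rw [h7]
      push_cast
      ring
  -- Step B : key inequality π 0 * T (m+1) ≤ (m+1) μ π (m+1)
  have hTsum : ∀ m : ℕ, Summable (fun j : ℕ => b (j + (m+1))) :=
    fun m => (summable_nat_add_iff m).mpr hbs
  have key2 : ∀ m : ℕ, π 0 * (∑' j : ℕ, b (j + (m+1))) ≤ ((m:ℝ)+1) * μ * π (m+1) := by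
    intro m
    set T : ℝ := ∑' j : ℕ, b (j + (m+1)) with hT
    have hk := key (m+1)
    rw [Finset.sum_range_succ'] at hk
    have e0 : ∀ i ∈ Finset.range m,
        c (i+1) * P (m + 1 - 1 - (i+1)) = b (i+1) * P (m - (i+1)) := by
      intro i _
      simp only [hc, Nat.add_one_ne_zero, if_false]
      have h9 : m + 1 - 1 - (i+1) = m - (i+1) := by omega
      rw [h9]
    rw [Finset.sum_congr rfl e0] at hk
    have e1 : c 0 * P (m + 1 - 1 - 0) = -B * P m := by simp [hc]
    rw [e1] at hk
    have hBdec : B = (∑ i ∈ Finset.range m, b (i+1)) + T := by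
      rw [hB, hT]
      exact (Summable.sum_add_tsum_nat_add m hbs).symm
    have hPle : ∀ a b : ℕ, a ≤ b → P a ≤ P b := by
      intro a b' h
      exact Finset.sum_le_sum_of_subset_of_nonneg
        (Finset.range_subset_range.mpr (by omega)) (fun i _ _ => hπ i)
    have hπ0P : π 0 ≤ P m := by
      have := hPle 0 m (Nat.zero_le m)
      simpa [hP] using this
    have hT0 : (0:ℝ) ≤ T := tsum_nonneg (fun j => hb _ (by omega))
    have hsum0 : (0:ℝ) ≤ ∑ i ∈ Finset.range m, b (i+1) * (P m - P (m - (i+1))) :=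
      Finset.sum_nonneg (fun i _ => mul_nonneg (hb _ (by omega))
        (by linarith [hPle (m - (i+1)) m (by omega)]))
    have expand : ∑ i ∈ Finset.range m, b (i+1) * (P m - P (m - (i+1))) =
        (∑ i ∈ Finset.range m, b (i+1)) * P m -
          ∑ i ∈ Finset.range m, b (i+1) * P (m - (i+1)) := by
      rw [Finset.sum_mul, ← Finset.sum_sub_distrib]
      exact Finset.sum_congr rfl (fun i _ => by ring)
    have hBP : B * P m = (∑ i ∈ Finset.range m, b (i+1)) * P m + T * P m := by
      rw [hBdec]; ring
    have hTP : π 0 * T ≤ T * P m := by nlinarith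
    have hcast : ((m+1 : ℕ) : ℝ) = (m:ℝ) + 1 := by push_cast; ring
    rw [hcast] at hk
    linarith
  -- Step C : partial sum bound
  set C : ℝ := Real.log (1 + Real.exp 1) / Real.log 2 with hCdef
  have he1 : (1:ℝ) < Real.exp 1 := by have := Real.exp_one_gt_d9; linarith
  have hC : 0 ≤ C := div_nonneg (Real.log_nonneg (by linarith)) (Real.log_nonneg (by norm_num))
  have hnn : ∀ k : ℕ, 0 ≤ Real.log ((k + 1 : ℕ) + Real.exp 1) * b (k + 1) := by
    intro k
    apply mul_nonneg _ (hb _ (by omega))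
    apply Real.log_nonneg
    have : (0:ℝ) ≤ ((k+1:ℕ):ℝ) := Nat.cast_nonneg _
    linarith
  have hbound : ∀ N : ℕ,
      ∑ k ∈ Finset.range N, Real.log ((k + 1 : ℕ) + Real.exp 1) * b (k + 1) ≤
        (μ * Real.log (1 + Real.exp 1) / Real.log 2) * (1 - π 0) / π 0 := by
    intro N
    -- termwise bound by harmonic numbers
    have step1 : ∑ k ∈ Finset.range N, Real.log ((k + 1 : ℕ) + Real.exp 1) * b (k + 1) ≤
        C * ∑ k ∈ Finset.range N, (∑ n ∈ Finset.range (k+1), (1:ℝ)/(n+1)) * b (k+1) := by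
      rw [Finset.mul_sum]
      apply Finset.sum_le_sum
      intro k _
      have hh := aux_harm (k+1)
      have hr := aux_ratio ((k:ℝ)+1) (by linarith [Nat.cast_nonneg (α := ℝ) k])
      have hcast : ((k+1:ℕ):ℝ) = (k:ℝ)+1 := by push_cast; ring
      rw [hcast] at hh ⊢
      have hlog : Real.log ((k:ℝ)+1 + Real.exp 1) ≤
          C * ∑ n ∈ Finset.range (k+1), (1:ℝ)/(n+1) := by
        calc Real.log ((k:ℝ)+1 + Real.exp 1) ≤ C * Real.log ((k:ℝ)+1+1) := hr
          _ ≤ C * ∑ n ∈ Finset.range (k+1), (1:ℝ)/(n+1) :=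
            mul_le_mul_of_nonneg_left hh hC
      calc Real.log ((k:ℝ)+1 + Real.exp 1) * b (k+1)
          ≤ (C * ∑ n ∈ Finset.range (k+1), (1:ℝ)/(n+1)) * b (k+1) :=
            mul_le_mul_of_nonneg_right hlog (hb _ (by omega))
        _ = C * ((∑ n ∈ Finset.range (k+1), (1:ℝ)/(n+1)) * b (k+1)) := by ring
    -- swap order of summation
    have step2 : ∑ k ∈ Finset.range N, (∑ n ∈ Finset.range (k+1), (1:ℝ)/(n+1)) * b (k+1) =
        ∑ n ∈ Finset.range N, (1/((n:ℝ)+1)) * ∑ k ∈ Finset.Ico n N, b (k+1) := by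
      have e2 : ∀ k ∈ Finset.range N, (∑ n ∈ Finset.range (k+1), (1:ℝ)/(n+1)) * b (k+1) =
          ∑ n ∈ Finset.range (k+1), (1/((n:ℝ)+1)) * b (k+1) := by
        intro k _; rw [Finset.sum_mul]
      rw [Finset.sum_congr rfl e2]
      rw [Finset.sum_comm' (t' := Finset.range N) (s' := fun n => Finset.Ico n N)
        (by intro k n; simp only [Finset.mem_range, Finset.mem_Ico]; omega)]
      exact Finset.sum_congr rfl (fun n _ => by rw [Finset.mul_sum])
    -- bound inner sums by tails, then by π
    have step3 : ∑ n ∈ Finset.range N, (1/((n:ℝ)+1)) * ∑ k ∈ Finset.Ico n N, b (k+1) ≤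
        ∑ n ∈ Finset.range N, (μ / π 0) * π (n+1) := by
      apply Finset.sum_le_sum
      intro n _
      have htail : ∑ k ∈ Finset.Ico n N, b (k+1) ≤ ∑' j : ℕ, b (j + (n+1)) := by
        rw [Finset.sum_Ico_eq_sum_range]
        have e3 : ∀ i ∈ Finset.range (N - n), b (n + i + 1) = b (i + (n+1)) := by
          intro i _
          have : n + i + 1 = i + (n+1) := by omega
          rw [this]
        rw [Finset.sum_congr rfl e3]
        exact Summable.sum_le_tsum _ (fun j _ => hb _ (by omega)) (hTsum n)
      have hinv : (0:ℝ) ≤ 1/((n:ℝ)+1) := by positivity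
      calc (1/((n:ℝ)+1)) * ∑ k ∈ Finset.Ico n N, b (k+1)
          ≤ (1/((n:ℝ)+1)) * ∑' j : ℕ, b (j + (n+1)) :=
            mul_le_mul_of_nonneg_left htail hinv
        _ ≤ (μ / π 0) * π (n+1) := by
            have hk2 := key2 n
            have hn1 : (0:ℝ) < (n:ℝ)+1 := by positivity
            have ea : (1/((n:ℝ)+1)) * ∑' j : ℕ, b (j + (n+1)) =
                (∑' j : ℕ, b (j + (n+1))) / ((n:ℝ)+1) := by ring
            have eb : μ / π 0 * π (n+1) = (μ * π (n+1)) / π 0 := by ring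
            rw [ea, eb, div_le_div_iff₀ hn1 h0]
            nlinarith [hk2]
    -- bound by total mass
    have step4 : ∑ n ∈ Finset.range N, π (n+1) ≤ 1 - π 0 := by
      have h6 : ∑ j ∈ Finset.range (N+1), π j ≤ 1 :=
        sum_le_hasSum _ (fun i _ => hπ i) hπ1
      rw [Finset.sum_range_succ'] at h6
      linarith
    have step5 : ∑ n ∈ Finset.range N, (μ / π 0) * π (n+1) ≤ (μ / π 0) * (1 - π 0) := by
      rw [← Finset.mul_sum]
      exact mul_le_mul_of_nonneg_left step4 (by positivity)
    have hfinal : C * ((μ / π 0) * (1 - π 0)) =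
        (μ * Real.log (1 + Real.exp 1) / Real.log 2) * (1 - π 0) / π 0 := by
      rw [hCdef]; ring
    calc ∑ k ∈ Finset.range N, Real.log ((k + 1 : ℕ) + Real.exp 1) * b (k + 1)
        ≤ C * ∑ k ∈ Finset.range N, (∑ n ∈ Finset.range (k+1), (1:ℝ)/(n+1)) * b (k+1) := step1
      _ = C * ∑ n ∈ Finset.range N, (1/((n:ℝ)+1)) * ∑ k ∈ Finset.Ico n N, b (k+1) := by
          rw [step2]
      _ ≤ C * ∑ n ∈ Finset.range N, (μ / π 0) * π (n+1) :=
          mul_le_mul_of_nonneg_left step3 hC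
      _ ≤ C * ((μ / π 0) * (1 - π 0)) := mul_le_mul_of_nonneg_left step5 hC
      _ = _ := hfinal
  have hs := summable_of_sum_range_le hnn hbound
  exact ⟨hs, Summable.tsum_le_of_sum_range_le hs hbound⟩
end
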